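/- arXiv:0911.4593 — 6 statements merged into one kernel-verified Lean document; each statement's English description precedes it below -/
import Mathlib

section
/- Let L/F be a finite totally and tamely ramified Galois extension of local fields with cyclic Galois group generated by σ, and let m ≥ 1. If y lies in the m-th power of the maximal ideal of O_L and Tr_{L/F}(y) = 0, then there exists x in the m-th power of the maximal ideal of O_L with x - σ(x) = y. -/
/-!
With `e = [L:F]` and `y` of trace zero, the element `x = -e⁻¹ ∑_{i<e} (i + 1) σⁱ(y)` satisfies
`x - σ x = y`, since `e (x - σ x)` telescopes to `e y - ∑_{i<e} σⁱ(y) = e y - Tr(y)`. Tameness makes `e⁻¹`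
integral, and `σ` preserves `p_L^m` because its restriction to `O_L` has finite order, hence
is invertible and so a local homomorphism; thus `x ∈ p_L^m`.
-/

open Finset IsLocalRing

theorem sum_range_succ_nsmul_iterate_add_nsmul_iterate {M F : Type*} [AddCommMonoid M]
    [FunLike F M M] [AddMonoidHomClass F M M] (f : F) (y : M) (n : ℕ) :
    ∑ i ∈ range n, (i + 1) • f^[i] y + n • f^[n] y =
      f (∑ i ∈ range n, (i + 1) • f^[i] y) + ∑ i ∈ range n, f^[i] y := by
  induction n with
  | zero => simp
  | succ n ih =>
    simp only [sum_range_succ, map_add, map_nsmul, Function.iterate_succ_apply']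
    calc _ = (∑ i ∈ range n, (i + 1) • f^[i] y + n • f^[n] y) + f^[n] y
          + (n + 1) • f (f^[n] y) := by rw [succ_nsmul (f^[n] y) n, add_assoc _ (n • _)]
      _ = _ := by rw [ih]; ac_rfl

theorem RingHom.exists_mem_sub_apply_eq_of_sum_iterate_eq_zero {R : Type*} [CommRing R]
    (φ : R →+* R) {n : ℕ} (hn : IsUnit (n : R)) {I : Ideal R} (hI : I ≤ I.comap φ) {y : R}
    (hy : y ∈ I) (hper : φ^[n] y = y) (hsum : ∑ i ∈ Finset.range n, φ^[i] y = 0) :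
    ∃ x ∈ I, x - φ x = y := by
  set W := ∑ i ∈ Finset.range n, (i + 1) • φ^[i] y
  have hW : W - φ W = -(n * y) := by
    have := sum_range_succ_nsmul_iterate_add_nsmul_iterate φ y n
    rw [hper, hsum, add_zero, nsmul_eq_mul] at this
    linear_combination this
  obtain ⟨v, hv⟩ := hn.exists_left_inv
  have hφv : φ v = v := hn.mul_left_injective <| by
    show φ v * n = v * n
    rw [hv, ← map_natCast φ, ← map_mul, hv, map_one]
  refine ⟨-(v * W), I.neg_mem (I.mul_mem_left _ ?_), ?_⟩
  · have hiter : ∀ i, φ^[i] y ∈ I := fun i =>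
      Set.MapsTo.iterate (f := φ) (s := I) (fun _ ha => hI ha) i hy
    exact I.sum_mem fun i _ => I.nsmul_mem (hiter i) _
  · rw [map_neg, map_mul, hφv]
    linear_combination (-v) * hW + y * hv

theorem IsLocalRing.maximalIdeal_pow_le_comap_of_iterate_eq_id {R : Type*} [CommRing R]
    [IsLocalRing R] {φ : R →+* R} {n : ℕ} (hn : n ≠ 0) (hφ : φ^[n] = id) (m : ℕ) :
    maximalIdeal R ^ m ≤ (maximalIdeal R ^ m).comap φ := by
  have : IsLocalHom φ := isLocalHom_of_leftInverse (φ ^ (n - 1)) fun a => by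
    rw [RingHom.coe_pow, ← Function.iterate_succ_apply, Nat.succ_eq_add_one,
      Nat.sub_one_add_one hn, hφ, id]
  simpa only [maximalIdeal_comap] using Ideal.le_comap_pow φ (K := maximalIdeal R) m

theorem sum_univ_eq_sum_range_pow_of_forall_mem_zpowers {G M : Type*} [Group G] [Fintype G]
    [AddCommMonoid M] {g : G} (hg : ∀ x, x ∈ Subgroup.zpowers g) (f : G → M) :
    ∑ x, f x = ∑ i ∈ range (orderOf g), f (g ^ i) := by
  classical
  rw [← IsCyclic.image_range_orderOf hg, sum_image fun i hi j hj =>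
    pow_injOn_Iio_orderOf (by simpa using hi) (by simpa using hj)]

theorem additive_hilbert90_maximal_ideal_general {F L : Type*} [Field F] [Field L] [Algebra F L]
    [FiniteDimensional F L] [IsGalois F L] (σ : L ≃ₐ[F] L)
    (hgen : ∀ τ : L ≃ₐ[F] L, τ ∈ Subgroup.zpowers σ)
    (A : Subring L) [IsDomain A] [IsDiscreteValuationRing A]
    (hσA : ∀ a : L, a ∈ A → σ a ∈ A)
    (htame : IsUnit ((Module.finrank F L : A)))
    (m : ℕ) (y : A)
    (hy : y ∈ (IsLocalRing.maximalIdeal A) ^ m)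
    (htr : Algebra.trace F L (y : L) = 0) :
    ∃ x : A, x ∈ (IsLocalRing.maximalIdeal A) ^ m ∧ (x : L) - σ (x : L) = (y : L) := by
  set φ := (σ : L →+* L).restrict A A hσA
  have hφ : ∀ k (a : A), ((φ^[k] a : A) : L) = (σ ^ k) a := fun k a => by
    rw [AlgEquiv.coe_pow]
    exact Function.Semiconj.iterate_right (f := Subtype.val) (fun _ => rfl) k a
  have hper : φ^[orderOf σ] = id := funext fun a => Subtype.ext <| by
    rw [hφ, pow_orderOf_eq_one, AlgEquiv.one_apply, id]
  have hsum : ∑ i ∈ range (orderOf σ), φ^[i] y = 0 := Subtype.ext <| by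
    have := trace_eq_sum_automorphisms (K := F) (y : L)
    rw [htr, map_zero, sum_univ_eq_sum_range_pow_of_forall_mem_zpowers hgen] at this
    push_cast [hφ]
    exact this.symm
  have hN : orderOf σ = Module.finrank F L := by
    rw [orderOf_eq_card_of_forall_mem_zpowers hgen, IsGalois.card_aut_eq_finrank]
  obtain ⟨x, hx, hxy⟩ := φ.exists_mem_sub_apply_eq_of_sum_iterate_eq_zero (hN ▸ htame)
    (maximalIdeal_pow_le_comap_of_iterate_eq_id (orderOf_pos σ).ne' hper m) hy
    (congrFun hper y) hsum
  exact ⟨x, hx, congrArg Subtype.val hxy⟩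

/-- Additive Hilbert 90 for powers of the maximal ideal: let `L/F` be a finite totally and
tamely ramified Galois extension of local fields with cyclic Galois group generated by `σ`,
`A ⊆ L` the (σ-stable) valuation ring of `L`, a discrete valuation ring in which the
degree `e = [L:F]` is a unit (tameness).  If `y` lies in the `m`-th power of the maximal
ideal of `A` and `Tr_{L/F}(y) = 0`, then there is `x` in the `m`-th power of the maximal
ideal with `x - σ(x) = y`. -/
theorem additive_hilbert90_maximal_ideal {F L : Type*} [Field F] [Field L] [Algebra F L]
    [FiniteDimensional F L] [IsGalois F L] (σ : L ≃ₐ[F] L)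
    (hgen : ∀ τ : L ≃ₐ[F] L, τ ∈ Subgroup.zpowers σ)
    (A : Subring L) [IsDomain A] [IsDiscreteValuationRing A]
    (hval : ∀ x : L, x ∈ A ∨ x⁻¹ ∈ A)
    (hσA : ∀ a : L, a ∈ A → σ a ∈ A)
    (htame : IsUnit ((Module.finrank F L : A)))
    (m : ℕ) (hm : 1 ≤ m) (y : A)
    (hy : y ∈ (IsLocalRing.maximalIdeal A) ^ m)
    (htr : Algebra.trace F L (y : L) = 0) :
    ∃ x : A, x ∈ (IsLocalRing.maximalIdeal A) ^ m ∧ (x : L) - σ (x : L) = (y : L) :=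
  additive_hilbert90_maximal_ideal_general σ hgen A hσA htame m y hy htr
end

section
/- Let R be a Bézout domain and v ∈ R^n a vector whose entries generate the unit ideal. Then there exists g ∈ SL_n(R) such that some entry of gv equals 1. -/
section Aux


open Matrix

variable {R : Type*} [CommRing R]

/-- A matrix acting as `!![p,q;r,s]` on coordinates `0, 1` of `Fin (m+2)`. -/
lemma plane_matrix_aux (m : ℕ) (p q r s : R) :
    ∃ g : Matrix (Fin (m+2)) (Fin (m+2)) R, g.det = p*s - q*r ∧
      ∀ w : Fin (m+2) → R, g.mulVec w 0 = p * w 0 + q * w 1 := by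
  set e : Fin 2 ⊕ Fin m ≃ Fin (m+2) := finSumFinEquiv.trans (finCongr (by omega)) with he
  have h0 : e.symm 0 = Sum.inl 0 := by
    rw [Equiv.symm_apply_eq]; apply Fin.ext; simp [he]
  have h1 : e (Sum.inl 1) = 1 := by apply Fin.ext; simp [he]
  have h0' : e (Sum.inl 0) = 0 := by rw [← h0, Equiv.apply_symm_apply]
  refine ⟨Matrix.reindex e e (Matrix.fromBlocks !![p,q;r,s] 0 0 1), ?_, ?_⟩
  · rw [Matrix.det_reindex_self, Matrix.det_fromBlocks_zero₂₁, Matrix.det_one, mul_one,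
      Matrix.det_fin_two_of]
  · intro w
    rw [Matrix.reindex_apply, Matrix.submatrix_mulVec_equiv]
    simp only [Function.comp, h0, Matrix.fromBlocks_mulVec]
    simp [Matrix.mulVec, dotProduct, Fin.sum_univ_two, h1, h0']

/-- Over a Bézout domain, for any pair `a b` there is a `det = 1` change of
coordinates whose first output generates `span {a, b}`. -/
lemma bezout_pair_aux [IsDomain R] [IsBezout R] (a b : R) :
    ∃ p q r s : R, p*s - q*r = 1 ∧ Ideal.span {p*a + q*b} = Ideal.span {a, b} := by
  have hfg : (Ideal.span ({a, b} : Set R)).FG := Submodule.fg_span (Set.toFinite _)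
  obtain ⟨d, hd⟩ := IsBezout.isPrincipal_of_FG _ hfg
  rw [Ideal.submodule_span_eq] at hd
  have hda : a ∈ Ideal.span ({d} : Set R) := by
    rw [← hd]; exact Ideal.subset_span (by simp)
  have hdb : b ∈ Ideal.span ({d} : Set R) := by
    rw [← hd]; exact Ideal.subset_span (by simp)
  rw [Ideal.mem_span_singleton] at hda hdb
  obtain ⟨a₁, ha₁⟩ := hda
  obtain ⟨b₁, hb₁⟩ := hdb
  have hdmem : d ∈ Ideal.span ({a, b} : Set R) := by rw [hd]; exact Ideal.subset_span rfl
  rw [Ideal.mem_span_pair] at hdmem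
  obtain ⟨x, y, hxy⟩ := hdmem
  by_cases hd0 : d = 0
  · subst hd0
    have ha0 : a = 0 := by rw [ha₁, zero_mul]
    have hb0 : b = 0 := by rw [hb₁, zero_mul]
    subst ha0; subst hb0
    exact ⟨1, 0, 0, 1, by ring, by norm_num⟩
  · have key : x * a₁ + y * b₁ = 1 := by
      have : d * (x * a₁ + y * b₁) = d * 1 := by
        linear_combination (-x) * ha₁ + (-y) * hb₁ + hxy
      exact mul_left_cancel₀ hd0 this
    refine ⟨x, y, -b₁, a₁, by linear_combination key, ?_⟩
    have hpq : x * a + y * b = d := hxy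
    rw [hpq, hd]

/-- Over a Bézout domain, any vector can be transformed by a `det = 1` matrix
so that the first entry of the image generates the ideal spanned by all entries. -/
lemma bezout_collapse_aux [IsDomain R] [IsBezout R] :
    ∀ (m : ℕ) (v : Fin (m+1) → R),
    ∃ g : Matrix (Fin (m+1)) (Fin (m+1)) R, g.det = 1 ∧
      Ideal.span {g.mulVec v 0} = Ideal.span (Set.range v) := by
  intro m
  induction m with
  | zero =>
    intro v
    refine ⟨1, Matrix.det_one, ?_⟩
    rw [Matrix.one_mulVec]
    congr 1
    ext x
    constructor
    · rintro rfl; exact ⟨0, rfl⟩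
    · rintro ⟨i, rfl⟩; rw [Fin.eq_zero i]; rfl
  | succ m IH =>
    intro v
    obtain ⟨g', hg'det, hg'span⟩ := IH (v ∘ Fin.succ)
    set e : Fin 1 ⊕ Fin (m+1) ≃ Fin (m+2) := finSumFinEquiv.trans (finCongr (by omega)) with he
    have h0 : e.symm 0 = Sum.inl 0 := by
      rw [Equiv.symm_apply_eq]; apply Fin.ext; simp [he]
    have h1 : e.symm 1 = Sum.inr 0 := by
      rw [Equiv.symm_apply_eq]; apply Fin.ext; simp [he]
    have hinr : ∀ i : Fin (m+1), e (Sum.inr i) = Fin.succ i := by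
      intro i; apply Fin.ext; simp [he, Nat.add_comm]
    set g₁ : Matrix (Fin (m+2)) (Fin (m+2)) R :=
      Matrix.reindex e e (Matrix.fromBlocks 1 0 0 g') with hg₁
    have hg₁det : g₁.det = 1 := by
      rw [hg₁, Matrix.det_reindex_self, Matrix.det_fromBlocks_zero₂₁, Matrix.det_one,
        one_mul, hg'det]
    set w := g₁.mulVec v with hw
    have hweq : w = (Matrix.fromBlocks 1 0 0 g' *ᵥ (v ∘ e)) ∘ e.symm := by
      rw [hw, hg₁, Matrix.reindex_apply, Matrix.submatrix_mulVec_equiv, Equiv.symm_symm]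
    have hvcomp : v ∘ e ∘ Sum.inr = v ∘ Fin.succ := by
      funext i; simp [Function.comp, hinr]
    have hw0 : w 0 = v 0 := by
      rw [hweq]
      simp only [Function.comp_apply, h0, Matrix.fromBlocks_mulVec, Sum.elim_inl]
      simp [Matrix.one_mulVec, Function.comp]
      rw [← h0, Equiv.apply_symm_apply]
    have hw1 : w 1 = g'.mulVec (v ∘ Fin.succ) 0 := by
      rw [hweq]
      simp only [Function.comp_apply, h1, Matrix.fromBlocks_mulVec, Sum.elim_inr]
      rw [show (v ∘ e) ∘ Sum.inr = v ∘ Fin.succ from hvcomp]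
      simp
    obtain ⟨p, q, r, s, hdet2, hspan2⟩ := bezout_pair_aux (w 0) (w 1)
    obtain ⟨g₂, hg₂det, hg₂vec⟩ := plane_matrix_aux m p q r s
    refine ⟨g₂ * g₁, ?_, ?_⟩
    · rw [Matrix.det_mul, hg₂det, hdet2, hg₁det, one_mul]
    · rw [← Matrix.mulVec_mulVec, ← hw, hg₂vec, hspan2, hw0, hw1]
      rw [Fin.range_fin_succ, show Fin.tail v = v ∘ Fin.succ from rfl,
        Ideal.span_insert, Ideal.span_insert, ← hg'span]

end Aux

/-- Over a Bézout domain `R`, any vector `v ∈ R^n` whose entries generate the unit ideal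
can be transformed by a matrix `g ∈ SL_n(R)` so that some entry of `g·v` equals `1`. -/
theorem bezout_unimodular_entry_one {R : Type*} [CommRing R] [IsDomain R] [IsBezout R]
    {n : ℕ} (hn : 2 ≤ n) (v : Fin n → R) (hv : Ideal.span (Set.range v) = ⊤) :
    ∃ g : Matrix (Fin n) (Fin n) R, g.det = 1 ∧ ∃ i, g.mulVec v i = 1 := by
  obtain ⟨m, rfl⟩ : ∃ m, n = m + 2 := ⟨n - 2, by omega⟩
  obtain ⟨g₀, h₀det, h₀span⟩ := bezout_collapse_aux (m+1) v
  set d := g₀.mulVec v 0 with hd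
  have hdu : IsUnit d := by
    rw [← Ideal.span_singleton_eq_top]
    rw [h₀span, hv]
  obtain ⟨u, hu⟩ := hdu
  obtain ⟨g₂, hg₂det, hg₂vec⟩ := plane_matrix_aux m (↑u⁻¹ : R) 0 0 d
  refine ⟨g₂ * g₀, ?_, 0, ?_⟩
  · rw [Matrix.det_mul, hg₂det, h₀det, mul_one, mul_zero, sub_zero, ← hu]
    exact u.inv_mul
  · rw [← Matrix.mulVec_mulVec, hg₂vec, ← hd, zero_mul, add_zero, ← hu]
    exact u.inv_mul
end

section
/- Let O be the ring of integers of a local field with residue field of q elements, r ≥ i ≥ r/2, and K_i = 1 + π^i·M_2(O/π^r) the i-th congruence subgroup of GL_2(O/π^r). The map sending β ∈ M_2(O/π^{r-i}) to the character ψ_β(x) = ψ(Tr(β(x−1))) of K_i ∩ SL_2 has kernel exactly the scalar matrices Z_{r-i}, inducing an isomorphism M_2(O/π^{r-i})/Z_{r-i} ≅ Hom(K_i ∩ SL_2(O/π^r), ℂ^×). -/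
/-!
For `2i ≥ r` any two entries of `x - 1`, `x ∈ K_i`, multiply to zero in `R = O/π^r`, so
`x ↦ x - 1` is an isomorphism from `K_i` onto the additive group of trace-zero matrices with
entries in `π^i R`, and `ψ_β(x) = ψ(tr(β(x - 1)))` is a character.  A trace-zero matrix is
determined by its entries `a₀₀, a₀₁, a₁₀`, and `tr(βa) = (β₀₀ - β₁₁)a₀₀ + β₁₀a₀₁ + β₀₁a₁₀`.
Since `ψ` is primitive, `ψ_β` is trivial iff `π^i` kills `β₀₀ - β₁₁, β₀₁, β₁₀`, i.e. iff they
lie in `π^{r-i}R`.  Since `R` is finite, `c ↦ ψ(c ·)` is onto the characters of `R`, and every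
character of `π^i R` is of the form `ψ(c ·)`: this gives every character of `K_i` coordinatewise.
-/

open Matrix

namespace AddChar

variable {R M : Type*} [CommRing R] [CommMonoid M] {ψ : AddChar R M}

theorem IsPrimitive.eq_zero_of_forall_apply_mul_eq_one (hψ : ψ.IsPrimitive) {t : R}
    (h : ∀ a, ψ (t * a) = 1) : t = 0 := by
  by_contra ht
  exact hψ ht (DFunLike.ext _ _ fun a => by simpa [mulShift_apply] using h a)

theorem IsPrimitive.exists_mulShift_eq [Finite R] {ψ : AddChar R ℂ} (hψ : ψ.IsPrimitive)
    (η : AddChar R ℂ) : ∃ c, ψ.mulShift c = η := by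
  have := Fintype.ofFinite R
  exact ((Fintype.bijective_iff_injective_and_card _).2
    ⟨to_mulShift_inj_of_isPrimitive hψ, card_eq.symm⟩).2 η

end AddChar

namespace Matrix

variable {R S : Type*} [CommRing R] [CommRing S] {f : R →+* S}

theorem mul_eq_zero_of_map_eq_zero {n : Type*} [Fintype n]
    (hf : ∀ a b, f a = 0 → f b = 0 → a * b = 0) {A B : Matrix n n R}
    (hA : ∀ j k, f (A j k) = 0) (hB : ∀ j k, f (B j k) = 0) : A * B = 0 := by
  ext j k
  exact Finset.sum_eq_zero fun l _ => hf _ _ (hA j l) (hB l k)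

theorem det_one_add_of_map_eq_zero (hf : ∀ a b, f a = 0 → f b = 0 → a * b = 0)
    {A : Matrix (Fin 2) (Fin 2) R} (hA : ∀ j k, f (A j k) = 0) :
    (1 + A).det = 1 + A.trace := by
  rw [det_fin_two, trace_fin_two]
  simp only [add_apply, one_apply_eq, one_apply_ne zero_ne_one, one_apply_ne one_ne_zero]
  linear_combination hf _ _ (hA 0 0) (hA 1 1) - hf _ _ (hA 0 1) (hA 1 0)

theorem trace_mul_of_trace_eq_zero (β : Matrix (Fin 2) (Fin 2) R)
    {A : Matrix (Fin 2) (Fin 2) R} (hA : A.trace = 0) :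
    (β * A).trace = (β 0 0 - β 1 1) * A 0 0 + β 1 0 * A 0 1 + β 0 1 * A 1 0 := by
  rw [trace_fin_two] at hA
  simp only [trace_fin_two, mul_apply, Fin.sum_univ_two]
  linear_combination β 1 1 * hA

theorem exists_eq_smul_one_add_smul_iff (β : Matrix (Fin 2) (Fin 2) R) (δ : R) :
    (∃ (z : R) (γ : Matrix (Fin 2) (Fin 2) R), β = z • 1 + δ • γ) ↔
      δ ∣ β 0 0 - β 1 1 ∧ δ ∣ β 0 1 ∧ δ ∣ β 1 0 := by
  constructor
  · rintro ⟨z, γ, rfl⟩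
    simp only [add_apply, smul_apply, one_apply_eq, one_apply_ne zero_ne_one,
      one_apply_ne one_ne_zero, smul_eq_mul, mul_zero, zero_add, add_sub_add_left_eq_sub,
      ← mul_sub]
    exact ⟨dvd_mul_right _ _, dvd_mul_right _ _, dvd_mul_right _ _⟩
  · rintro ⟨⟨a, ha⟩, ⟨b, hb⟩, ⟨c, hc⟩⟩
    refine ⟨β 1 1, !![a, b; c, 0], ?_⟩
    ext j k
    fin_cases j <;> fin_cases k <;> simp
    exacts [by linear_combination ha, hb, hc]

-- For the reduction `O/π^r → O/π^i` this is `π^i sl₂(O/π^r) ≅ sl₂(O/π^{r-i})`.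
variable (f) in
def sl2Ker : AddSubgroup (Matrix (Fin 2) (Fin 2) R) where
  carrier := {A | A.trace = 0 ∧ ∀ j k, f (A j k) = 0}
  zero_mem' := ⟨trace_zero _ _, fun _ _ => map_zero f⟩
  add_mem' := fun ⟨hA, hA'⟩ ⟨hB, hB'⟩ =>
    ⟨by rw [trace_add, hA, hB, add_zero], fun j k => by simp [hA', hB']⟩
  neg_mem' := fun ⟨hA, hA'⟩ => ⟨by rw [trace_neg, hA, neg_zero], fun j k => by simp [hA']⟩

namespace SpecialLinearGroup

theorem mem_ker_map_iff {n : Type*} [Fintype n] [DecidableEq n] {x : SpecialLinearGroup n R} :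
    x ∈ (map f).ker ↔ ∀ j k, f ((x - 1 : Matrix n n R) j k) = 0 := by
  simp_rw [MonoidHom.mem_ker, ext_iff, map_apply_coe, RingHom.mapMatrix_apply, map_apply,
    coe_one, sub_apply, map_sub, sub_eq_zero, one_apply, apply_ite f, map_one, map_zero]

def kerMapEquiv (hf : ∀ a b, f a = 0 → f b = 0 → a * b = 0) :
    (map f : SpecialLinearGroup (Fin 2) R →* _).ker ≃* Multiplicative (sl2Ker f) where
  toFun x := .ofAdd ⟨(x : Matrix (Fin 2) (Fin 2) R) - 1, by
    have hx := mem_ker_map_iff.1 x.2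
    refine ⟨?_, hx⟩
    have := det_one_add_of_map_eq_zero hf hx
    rwa [add_sub_cancel, det_coe, left_eq_add] at this⟩
  invFun A := ⟨⟨1 + A.toAdd, by
      rw [det_one_add_of_map_eq_zero hf A.toAdd.2.2, A.toAdd.2.1, add_zero]⟩,
    mem_ker_map_iff.2 (by simpa using A.toAdd.2.2)⟩
  left_inv x := by ext : 3; simp
  right_inv A := by ext : 2; simp
  map_mul' x y := by
    have h0 := mul_eq_zero_of_map_eq_zero hf (mem_ker_map_iff.1 x.2) (mem_ker_map_iff.1 y.2)
    apply Multiplicative.toAdd.injective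
    ext : 1
    simp only [toAdd_ofAdd, toAdd_mul, AddSubgroup.coe_add, Subgroup.coe_mul, coe_mul]
    calc ((x : SpecialLinearGroup (Fin 2) R) : Matrix (Fin 2) (Fin 2) R) * y - 1
        = (x - 1) * (y - 1) + (x - 1) + (y - 1) := by noncomm_ring
      _ = _ := by rw [h0, zero_add]

end SpecialLinearGroup

namespace sl2Ker

variable {M : Type*} [CommMonoid M] {ψ : AddChar R M}

theorem smul_mem {y : R} (hy : f y = 0) {A : Matrix (Fin 2) (Fin 2) R} (hA : A.trace = 0) :
    y • A ∈ sl2Ker f :=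
  ⟨by rw [trace_smul, hA, smul_zero], fun j k => by simp [hy]⟩

theorem forall_trace_mul_eq_one_iff (hψ : ψ.IsPrimitive) (β : Matrix (Fin 2) (Fin 2) R) :
    (∀ A : sl2Ker f, ψ (β * A).trace = 1) ↔
      ∀ x, f x = 0 → (β 0 0 - β 1 1) * x = 0 ∧ β 0 1 * x = 0 ∧ β 1 0 * x = 0 := by
  constructor
  · intro h x hx
    have hval : ∀ B ∈ sl2Ker f,
        ψ ((β 0 0 - β 1 1) * B 0 0 + β 1 0 * B 0 1 + β 0 1 * B 1 0) = 1 :=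
      fun B hB => by rw [← trace_mul_of_trace_eq_zero β hB.1]; exact h ⟨B, hB⟩
    have hxa : ∀ a, f (x * a) = 0 := fun a => by rw [map_mul, hx, zero_mul]
    refine ⟨hψ.eq_zero_of_forall_apply_mul_eq_one fun a => ?_,
      hψ.eq_zero_of_forall_apply_mul_eq_one fun a => ?_,
      hψ.eq_zero_of_forall_apply_mul_eq_one fun a => ?_⟩
    · simpa [mul_assoc] using
        hval _ (smul_mem (hxa a) (A := !![1, 0; 0, -1]) (by simp [trace_fin_two]))
    · simpa [mul_assoc] using
        hval _ (smul_mem (hxa a) (A := !![0, 0; 1, 0]) (by simp [trace_fin_two]))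
    · simpa [mul_assoc] using
        hval _ (smul_mem (hxa a) (A := !![0, 1; 0, 0]) (by simp [trace_fin_two]))
  · intro h A
    obtain ⟨h00, -, -⟩ := h _ (A.2.2 0 0)
    obtain ⟨-, -, h10⟩ := h _ (A.2.2 0 1)
    obtain ⟨-, h01, -⟩ := h _ (A.2.2 1 0)
    rw [trace_mul_of_trace_eq_zero β A.2.1, h00, h10, h01, add_zero, add_zero,
      AddChar.map_zero_eq_one]

theorem exists_trace_mul_eq_addChar
    (hker : ∀ η : AddChar (RingHom.ker f) M, ∃ c, ∀ x, η x = ψ (c * x))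
    (ξ : AddChar (sl2Ker f) M) :
    ∃ β : Matrix (Fin 2) (Fin 2) R, ∀ A : sl2Ker f, ξ A = ψ (β * A).trace := by
  have hline : ∀ B : Matrix (Fin 2) (Fin 2) R, (hB : B.trace = 0) →
      ∃ c, ∀ y (hy : f y = 0), ξ ⟨y • B, smul_mem hy hB⟩ = ψ (c * y) := by
    intro B hB
    obtain ⟨c, hc⟩ := hker
      { toFun y := ξ ⟨(y : R) • B, smul_mem y.2 hB⟩
        map_zero_eq_one' := by
          simp only [ZeroMemClass.coe_zero, zero_smul]
          exact ξ.map_zero_eq_one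
        map_add_eq_mul' y z := by
          simp only [AddMemClass.coe_add, add_smul]
          exact ξ.map_add_eq_mul ⟨_, _⟩ ⟨_, _⟩ }
    exact ⟨c, fun y hy => hc ⟨y, hy⟩⟩
  obtain ⟨a, ha⟩ := hline !![1, 0; 0, -1] (by simp [trace_fin_two])
  obtain ⟨b, hb⟩ := hline !![0, 1; 0, 0] (by simp [trace_fin_two])
  obtain ⟨c, hc⟩ := hline !![0, 0; 1, 0] (by simp [trace_fin_two])
  refine ⟨!![a, c; b, 0], ?_⟩
  rintro ⟨A, hA, hAf⟩
  have hdecomp : (⟨A, hA, hAf⟩ : sl2Ker f) =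
      ⟨A 0 0 • !![1, 0; 0, -1], smul_mem (hAf 0 0) (by simp [trace_fin_two])⟩ +
      ⟨A 0 1 • !![0, 1; 0, 0], smul_mem (hAf 0 1) (by simp [trace_fin_two])⟩ +
      ⟨A 1 0 • !![0, 0; 1, 0], smul_mem (hAf 1 0) (by simp [trace_fin_two])⟩ := by
    rw [trace_fin_two] at hA
    ext j k
    fin_cases j <;> fin_cases k <;> simp
    linear_combination hA
  rw [hdecomp, AddChar.map_add_eq_mul, AddChar.map_add_eq_mul, ha _ (hAf 0 0), hb _ (hAf 0 1),
    hc _ (hAf 1 0), ← AddChar.map_add_eq_mul, ← AddChar.map_add_eq_mul, ← hdecomp]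
  change _ = ψ (!![a, c; b, 0] * A).trace
  rw [trace_mul_of_trace_eq_zero _ hA]
  simp

end sl2Ker

end Matrix

namespace Ideal.Quotient

variable {O : Type*} [CommRing O]

theorem mk_pow_eq_zero_of_le (π : O) {r e : ℕ} (h : r ≤ e) : mk (span {π ^ r}) π ^ e = 0 := by
  rw [← map_pow, eq_zero_iff_mem, mem_span_singleton]
  exact pow_dvd_pow π h

theorem factor_eq_zero_iff {S : Ideal O} {a : O} (h : S ≤ span {a}) (x : O ⧸ S) :
    factor h x = 0 ↔ mk S a ∣ x := by
  obtain ⟨u, rfl⟩ := mk_surjective x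
  rw [factor_mk, eq_zero_iff_mem, mem_span_singleton]
  constructor
  · rintro ⟨v, rfl⟩
    exact ⟨mk S v, map_mul _ _ _⟩
  · rintro ⟨d, hd⟩
    obtain ⟨v, rfl⟩ := mk_surjective d
    rw [← map_mul, Ideal.Quotient.eq] at hd
    exact (dvd_sub_left (dvd_mul_right a v)).1 (mem_span_singleton.1 (h hd))

theorem mul_eq_zero_of_factor_eq_zero {π : O} {r i : ℕ} (h : span {π ^ r} ≤ span {π ^ i})
    (h2i : r ≤ 2 * i) {a b : O ⧸ span {π ^ r}} (ha : factor h a = 0) (hb : factor h b = 0) :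
    a * b = 0 := by
  obtain ⟨c, rfl⟩ := (factor_eq_zero_iff h a).1 ha
  obtain ⟨d, rfl⟩ := (factor_eq_zero_iff h b).1 hb
  rw [mul_mul_mul_comm, ← map_mul, ← pow_add, map_pow, mk_pow_eq_zero_of_le π (by omega),
    zero_mul]

variable [IsDomain O] {π : O}

theorem mk_pow_mul_eq_zero_iff (hπ : π ≠ 0) {r j : ℕ} (hj : j ≤ r) {c : O ⧸ span {π ^ r}} :
    mk _ π ^ j * c = 0 ↔ mk _ π ^ (r - j) ∣ c := by
  constructor
  · obtain ⟨u, rfl⟩ := mk_surjective c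
    rw [← map_pow, ← map_mul, eq_zero_iff_mem, mem_span_singleton]
    rintro ⟨v, hv⟩
    have : π ^ j * u = π ^ j * (π ^ (r - j) * v) := by
      rw [hv, ← mul_assoc, ← pow_add, Nat.add_sub_cancel' hj]
    exact ⟨mk _ v, by rw [mul_left_cancel₀ (pow_ne_zero j hπ) this, map_mul, map_pow]⟩
  · rintro ⟨d, rfl⟩
    rw [← mul_assoc, ← pow_add, Nat.add_sub_cancel' hj, mk_pow_eq_zero_of_le π le_rfl, zero_mul]

theorem dvd_mk_pow_pred [IsDiscreteValuationRing O] (hπ : Irreducible π) {r : ℕ}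
    {t : O ⧸ span {π ^ r}} (ht : t ≠ 0) : t ∣ mk _ π ^ (r - 1) := by
  obtain ⟨u, rfl⟩ := mk_surjective t
  have hu : u ≠ 0 := by rintro rfl; exact ht (map_zero _)
  obtain ⟨n, w, rfl⟩ := IsDiscreteValuationRing.eq_unit_mul_pow_irreducible hu hπ
  have hnr : n < r := by
    by_contra! hn
    exact ht (by rw [map_mul, map_pow, mk_pow_eq_zero_of_le π hn, mul_zero])
  refine ⟨mk _ (↑w⁻¹ * π ^ (r - 1 - n)), ?_⟩
  rw [← map_pow, ← map_mul]
  congr 1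
  rw [mul_mul_mul_comm, Units.mul_inv, one_mul, ← pow_add]
  congr 1
  omega

theorem isPrimitive_of_exists_apply_ne_one [IsDiscreteValuationRing O] (hπ : Irreducible π)
    {r : ℕ} {M : Type*} [CommMonoid M] {ψ : AddChar (O ⧸ span {π ^ r}) M}
    (hψ : ∃ a, ψ (mk _ π ^ (r - 1) * a) ≠ 1) : ψ.IsPrimitive := by
  intro t ht h1
  obtain ⟨a, ha⟩ := hψ
  obtain ⟨s, hs⟩ := dvd_mk_pow_pred hπ ht
  rw [hs, mul_assoc, ← AddChar.mulShift_apply, h1, AddChar.one_apply] at ha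
  exact ha rfl

variable {r i : ℕ} (h : span {π ^ r} ≤ span {π ^ i})

theorem forall_factor_eq_zero_imp_mul_eq_zero_iff (hπ : π ≠ 0) (hir : i ≤ r)
    (t : O ⧸ span {π ^ r}) :
    (∀ x, factor h x = 0 → t * x = 0) ↔ mk _ π ^ (r - i) ∣ t := by
  have hker : factor h (mk _ π ^ i) = 0 := by
    rw [factor_eq_zero_iff, map_pow]
  rw [← mk_pow_mul_eq_zero_iff hπ hir]
  refine ⟨fun ht => by rw [mul_comm]; exact ht _ hker, fun ht x hx => ?_⟩
  obtain ⟨y, rfl⟩ := (factor_eq_zero_iff h x).1 hx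
  rw [map_pow, ← mul_assoc, mul_comm t, ht, zero_mul]

theorem exists_forall_apply_eq_of_ker_factor [Finite (O ⧸ span {π ^ r})] (hπ : π ≠ 0)
    (hir : i ≤ r) {ψ : AddChar (O ⧸ span {π ^ r}) ℂ} (hψ : ψ.IsPrimitive)
    (η : AddChar (RingHom.ker (factor h)) ℂ) : ∃ c, ∀ x, η x = ψ (c * x) := by
  have hmem : ∀ a, mk _ π ^ i * a ∈ RingHom.ker (factor h) := fun a => by
    rw [RingHom.mem_ker, factor_eq_zero_iff, map_pow]
    exact dvd_mul_right _ _
  obtain ⟨c, hc⟩ := hψ.exists_mulShift_eq (η.compAddMonoidHom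
    ((LinearMap.mulLeft _ (mk _ π ^ i)).codRestrict _ hmem).toAddMonoidHom)
  have hc' : ∀ a, ψ (c * a) = η ⟨_, hmem a⟩ := fun a => DFunLike.congr_fun hc a
  -- `a ↦ η (π^i a)` kills `π^(r-i) R`, which forces `π^i ∣ c`.
  have hc0 : mk _ π ^ (r - i) * c = 0 := hψ.eq_zero_of_forall_apply_mul_eq_one fun a => by
    have h0 : (⟨_, hmem (mk _ π ^ (r - i) * a)⟩ : RingHom.ker (factor h)) = 0 := by
      ext : 1
      change mk _ π ^ i * (mk _ π ^ (r - i) * a) = 0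
      rw [← mul_assoc, ← pow_add, Nat.add_sub_cancel' hir, mk_pow_eq_zero_of_le π le_rfl,
        zero_mul]
    rw [mul_comm _ c, mul_assoc, hc', h0, AddChar.map_zero_eq_one]
  obtain ⟨d, rfl⟩ := (mk_pow_mul_eq_zero_iff hπ (Nat.sub_le r i)).1 hc0
  refine ⟨d, fun ⟨x, hx⟩ => ?_⟩
  obtain ⟨y, rfl⟩ := (factor_eq_zero_iff h x).1 (RingHom.mem_ker.1 hx)
  have hxy : (⟨_, hx⟩ : RingHom.ker (factor h)) = ⟨_, hmem y⟩ :=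
    Subtype.ext <| congrArg (· * y) (map_pow _ _ _)
  rw [hxy, ← hc', Nat.sub_sub_self hir, mul_right_comm, mul_comm]

end Ideal.Quotient

theorem characters_of_congruence_kernel_general {O : Type*} [CommRing O] [IsDomain O]
    [IsDiscreteValuationRing O] (π : O) (hπ : Irreducible π)
    [Finite (O ⧸ Ideal.span {π})] (r i : ℕ) (hir : i ≤ r) (h2i : r ≤ 2 * i)
    (ψ : AddChar (O ⧸ Ideal.span {π ^ r}) ℂ)
    (hψ : ∃ a : O ⧸ Ideal.span {π ^ r},
      ψ ((Ideal.Quotient.mk (Ideal.span {π ^ r}) π) ^ (r - 1) * a) ≠ 1) :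
    let R := O ⧸ Ideal.span {π ^ r}
    let K := MonoidHom.ker (Matrix.SpecialLinearGroup.map
      (Ideal.Quotient.factor (S := Ideal.span {π ^ r}) (T := Ideal.span {π ^ i})
        (Ideal.span_singleton_le_span_singleton.mpr (pow_dvd_pow π hir))))
    let Φ : Matrix (Fin 2) (Fin 2) R → K → ℂ := fun β x =>
      ψ ((β * ((x.val.val : Matrix (Fin 2) (Fin 2) R) - 1)).trace)
    (∀ (β : Matrix (Fin 2) (Fin 2) R) (x y : K), Φ β (x * y) = Φ β x * Φ β y) ∧
    (∀ (β γ : Matrix (Fin 2) (Fin 2) R) (x : K), Φ (β + γ) x = Φ β x * Φ γ x) ∧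
    (∀ β : Matrix (Fin 2) (Fin 2) R, (∀ x : K, Φ β x = 1) ↔
      ∃ (z : R) (γ : Matrix (Fin 2) (Fin 2) R),
        β = z • (1 : Matrix (Fin 2) (Fin 2) R) +
          (Ideal.Quotient.mk (Ideal.span {π ^ r}) π) ^ (r - i) • γ) ∧
    (∀ χ : K →* ℂ, ∃ β : Matrix (Fin 2) (Fin 2) R, ∀ x : K, Φ β x = χ x) := by
  intro R K Φ
  have h := Ideal.span_singleton_le_span_singleton.mpr (pow_dvd_pow π hir)
  have : Finite R := by
    have hfin := Ideal.finite_quotient_pow (Submodule.fg_span_singleton π) r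
    rwa [Ideal.span_singleton_pow] at hfin
  have hψ' := Ideal.Quotient.isPrimitive_of_exists_apply_ne_one hπ hψ
  let e := SpecialLinearGroup.kerMapEquiv fun _ _ =>
    Ideal.Quotient.mul_eq_zero_of_factor_eq_zero h h2i
  have hΦ : ∀ β x, Φ β x = ψ (β * (e x).toAdd).trace := fun _ _ => rfl
  refine ⟨fun β x y => ?_, fun β γ x => ?_, fun β => ?_, fun χ => ?_⟩
  · rw [hΦ, map_mul, toAdd_mul, AddSubgroup.coe_add, mul_add, trace_add, AddChar.map_add_eq_mul]
    rfl
  · simp only [Φ, add_mul, trace_add, AddChar.map_add_eq_mul]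
  · have htriv : (∀ x, Φ β x = 1) ↔
        ∀ A : sl2Ker (Ideal.Quotient.factor h), ψ (β * (A : Matrix (Fin 2) (Fin 2) R)).trace = 1 :=
      ⟨fun hβ A => by
        rw [← toAdd_ofAdd A, ← e.apply_symm_apply (.ofAdd A), ← hΦ]
        exact hβ _, fun hβ x => (hΦ β x).trans (hβ _)⟩
    simp only [htriv, sl2Ker.forall_trace_mul_eq_one_iff hψ', exists_eq_smul_one_add_smul_iff,
      ← Ideal.Quotient.forall_factor_eq_zero_imp_mul_eq_zero_iff h hπ.ne_zero hir, ← forall_and]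
  · obtain ⟨β, hβ⟩ := sl2Ker.exists_trace_mul_eq_addChar
      (Ideal.Quotient.exists_forall_apply_eq_of_ker_factor h hπ.ne_zero hir hψ')
      (AddChar.toMonoidHomEquiv.symm (χ.comp e.symm.toMonoidHom))
    exact ⟨β, fun x => by simp [hΦ, ← hβ]⟩

/-- Let `O` be the ring of integers of a local field with finite residue field, `π` a
uniformizer, `r ≥ i ≥ r/2`, and `K_i` the kernel of reduction `SL_2(O/π^r) → SL_2(O/π^i)`.
Fix an additive character `ψ` of `O/π^r` of conductor `π^r`.  The map sending (a lift of)
`β ∈ M_2(O/π^{r-i})` to the character `ψ_β(x) = ψ(Tr(β(x−1)))` of `K_i` is multiplicative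
in `x`, additive in `β`, its kernel consists exactly of the (lifts of) scalar matrices
`Z_{r-i}`, and it hits every character; i.e. it induces an isomorphism
`M_2(O/π^{r-i})/Z_{r-i} ≅ Hom(K_i, ℂ^×)`. -/
theorem characters_of_congruence_kernel {O : Type*} [CommRing O] [IsDomain O]
    [IsDiscreteValuationRing O] (π : O) (hπ : Irreducible π)
    [Finite (O ⧸ Ideal.span {π})] (r i : ℕ) (hr : 1 ≤ r) (hir : i ≤ r) (h2i : r ≤ 2 * i)
    (ψ : AddChar (O ⧸ Ideal.span {π ^ r}) ℂ)
    (hψ : ∃ a : O ⧸ Ideal.span {π ^ r},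
      ψ ((Ideal.Quotient.mk (Ideal.span {π ^ r}) π) ^ (r - 1) * a) ≠ 1) :
    let R := O ⧸ Ideal.span {π ^ r}
    let K := MonoidHom.ker (Matrix.SpecialLinearGroup.map
      (Ideal.Quotient.factor (S := Ideal.span {π ^ r}) (T := Ideal.span {π ^ i})
        (Ideal.span_singleton_le_span_singleton.mpr (pow_dvd_pow π hir))))
    let Φ : Matrix (Fin 2) (Fin 2) R → K → ℂ := fun β x =>
      ψ ((β * ((x.val.val : Matrix (Fin 2) (Fin 2) R) - 1)).trace)
    (∀ (β : Matrix (Fin 2) (Fin 2) R) (x y : K), Φ β (x * y) = Φ β x * Φ β y) ∧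
    (∀ (β γ : Matrix (Fin 2) (Fin 2) R) (x : K), Φ (β + γ) x = Φ β x * Φ γ x) ∧
    (∀ β : Matrix (Fin 2) (Fin 2) R, (∀ x : K, Φ β x = 1) ↔
      ∃ (z : R) (γ : Matrix (Fin 2) (Fin 2) R),
        β = z • (1 : Matrix (Fin 2) (Fin 2) R) +
          (Ideal.Quotient.mk (Ideal.span {π ^ r}) π) ^ (r - i) • γ) ∧
    (∀ χ : K →* ℂ, ∃ β : Matrix (Fin 2) (Fin 2) R, ∀ x : K, Φ β x = χ x) :=
  characters_of_congruence_kernel_general π hπ r i hir h2i ψ hψ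
end

section
/- Let O be a complete discrete valuation ring with uniformizer π and residue field of odd order q, and let i ≥ r/2. The map x ↦ 1 + π^i x induces a group isomorphism from the additive group sl_2(O/π^{r-i}) (trace-zero 2×2 matrices) onto the kernel of the reduction map SL_2(O/π^r) → SL_2(O/π^i). -/
/-!
Write `μ : O/π^(r-i) → O/π^r` for multiplication by `π^i`. It is injective, its image is the
kernel of `O/π^r → O/π^i`, and any two of its values multiply to zero because `π^(2i) = 0`
in `O/π^r`. Hence for matrices `A, B` over `O/π^(r-i)` we get
`(1 + μ A)(1 + μ B) = 1 + μ (A + B)` and `det (1 + μ A) = 1 + μ (tr A)`, so `A ↦ 1 + μ A`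
is a homomorphism from the additive group of trace-zero matrices onto the congruence kernel.
-/

namespace Ideal.Quotient

variable {R : Type*} [CommRing R]

noncomputable def mulLeft (a : R) {b c : R} (h : c ∣ a * b) :
    R ⧸ span {b} →ₗ[R] R ⧸ span {c} :=
  Submodule.liftQ _ ((span {c}).mkQ ∘ₗ LinearMap.mulLeft R a) <| by
    intro x hx
    obtain ⟨t, rfl⟩ := mem_span_singleton.mp hx
    rw [LinearMap.mem_ker, LinearMap.comp_apply, LinearMap.mulLeft_apply, Submodule.mkQ_apply,
      Submodule.Quotient.mk_eq_zero, mem_span_singleton, ← mul_assoc]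
    exact h.mul_right t

variable {a b c : R} (h : c ∣ a * b)

@[simp]
theorem mulLeft_mk (x : R) : mulLeft a h (mk _ x) = mk _ (a * x) := rfl

theorem mulLeft_mul_mulLeft (hsq : c ∣ a * a) (x y : R ⧸ span {b}) :
    mulLeft a h x * mulLeft a h y = 0 := by
  obtain ⟨x, rfl⟩ := mk_surjective x
  obtain ⟨y, rfl⟩ := mk_surjective y
  rw [mulLeft_mk, mulLeft_mk, ← map_mul, eq_zero_iff_mem, mem_span_singleton]
  exact (hsq.mul_right (x * y)).trans (dvd_of_eq (by ring))

theorem mulLeft_injective [IsDomain R] (ha : a ≠ 0) (hc : a * b ∣ c) :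
    Function.Injective (mulLeft a h) := by
  rw [← LinearMap.ker_eq_bot, LinearMap.ker_eq_bot']
  intro x hx
  obtain ⟨x, rfl⟩ := mk_surjective x
  rw [mulLeft_mk, eq_zero_iff_mem, mem_span_singleton] at hx
  rw [eq_zero_iff_mem, mem_span_singleton]
  exact (mul_dvd_mul_iff_left ha).mp (hc.trans hx)

theorem factor_eq_zero_iff_exists_mulLeft (hle : span {c} ≤ span {a}) (z : R ⧸ span {c}) :
    factor hle z = 0 ↔ ∃ x, mulLeft a h x = z := by
  obtain ⟨z, rfl⟩ := mk_surjective z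
  rw [factor_mk, eq_zero_iff_mem, mem_span_singleton]
  constructor
  · rintro ⟨t, rfl⟩
    exact ⟨mk _ t, rfl⟩
  · rintro ⟨x, hx⟩
    obtain ⟨x, rfl⟩ := mk_surjective x
    rw [mulLeft_mk, ← sub_eq_zero, ← map_sub, eq_zero_iff_mem, mem_span_singleton] at hx
    simpa using (dvd_mul_right a x).sub ((span_singleton_le_span_singleton.mp hle).trans hx)

theorem mapMatrix_one_add_smul {n : Type*} [Fintype n] [DecidableEq n] (x : Matrix n n R) :
    (mk (span {c})).mapMatrix (1 + a • x) =
      1 + ((mk (span {b})).mapMatrix x).map (mulLeft a h) := by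
  rw [map_add, map_one]
  rfl

end Ideal.Quotient

namespace Matrix

variable {n M S : Type*} [Fintype n] [AddCommMonoid M] [CommRing S] {μ : M →+ S}

theorem map_mul_map_eq_zero (hμ : ∀ x y, μ x * μ y = 0) (A B : Matrix n n M) :
    A.map μ * B.map μ = 0 := by
  ext i j
  simp [mul_apply, hμ]

theorem one_add_map_mul_one_add_map [DecidableEq n] (hμ : ∀ x y, μ x * μ y = 0)
    (A B : Matrix n n M) : (1 + A.map μ) * (1 + B.map μ) = 1 + (A + B).map μ := by
  rw [Matrix.map_add μ (map_add μ), mul_add, add_mul, add_mul, map_mul_map_eq_zero hμ]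
  simp only [one_mul, mul_one, add_zero, add_assoc]

theorem det_fin_two_one_add_map (hμ : ∀ x y, μ x * μ y = 0) (A : Matrix (Fin 2) (Fin 2) M) :
    (1 + A.map μ).det = 1 + μ A.trace := by
  rw [det_fin_two, trace_fin_two, map_add]
  simp only [add_apply, map_apply, one_apply_eq, one_apply_ne zero_ne_one,
    one_apply_ne one_ne_zero, zero_add]
  linear_combination hμ (A 0 0) (A 1 1) - hμ (A 0 1) (A 1 0)

end Matrix

namespace Matrix.SpecialLinearGroup

variable {M S T : Type*} [CommRing M] [CommRing S] [CommRing T]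

theorem map_eq_one_iff {n : Type*} [Fintype n] [DecidableEq n] (f : S →+* T)
    (g : SpecialLinearGroup n S) :
    map f g = 1 ↔ ∀ a b, f (((g : Matrix n n S) - 1) a b) = 0 := by
  simp only [SpecialLinearGroup.ext_iff, map_apply_coe, RingHom.mapMatrix_apply, map_apply,
    coe_one, sub_apply, map_sub, sub_eq_zero, one_apply, apply_ite f, map_one, map_zero]

variable {μ : M →+ S} (hμ : ∀ x y, μ x * μ y = 0)

def oneAddMap :
    Multiplicative (LinearMap.ker (traceLinearMap (Fin 2) M M)) →*
      SpecialLinearGroup (Fin 2) S where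
  toFun A := ⟨1 + A.toAdd.1.map μ, by
    rw [det_fin_two_one_add_map hμ, ← traceLinearMap_apply _ M, LinearMap.mem_ker.mp A.toAdd.2,
      map_zero, add_zero]⟩
  map_one' := by ext; simp
  map_mul' A B := Subtype.ext (one_add_map_mul_one_add_map hμ _ _).symm

theorem coe_oneAddMap (A : Multiplicative (LinearMap.ker (traceLinearMap (Fin 2) M M))) :
    (oneAddMap hμ A : Matrix (Fin 2) (Fin 2) S) = 1 + A.toAdd.1.map μ :=
  rfl

theorem oneAddMap_injective (hinj : Function.Injective μ) :
    Function.Injective (oneAddMap hμ) := by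
  intro A B hAB
  have hmap := add_left_cancel (congrArg Subtype.val hAB)
  exact Multiplicative.toAdd.injective (Subtype.ext (Matrix.map_injective hinj hmap))

theorem range_oneAddMap (hinj : Function.Injective μ) (f : S →+* T)
    (hker : ∀ z, f z = 0 ↔ ∃ x, μ x = z) :
    (oneAddMap hμ).range = (map (n := Fin 2) f).ker := by
  ext g
  rw [MonoidHom.mem_ker, map_eq_one_iff]
  constructor
  · rintro ⟨A, rfl⟩ a b
    rw [coe_oneAddMap, add_sub_cancel_left]
    exact (hker _).mpr ⟨_, rfl⟩
  · intro hg
    choose A hA using fun a b => (hker _).mp (hg a b)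
    have hgA : (g : Matrix (Fin 2) (Fin 2) S) = 1 + (Matrix.of A).map μ := by
      ext a b; simp [hA]
    have htr : (Matrix.of A).trace = 0 := by
      apply hinj
      rw [map_zero, ← add_eq_left (a := (1 : S)), ← det_fin_two_one_add_map hμ, ← hgA, g.2]
    exact ⟨Multiplicative.ofAdd ⟨Matrix.of A, htr⟩, Subtype.ext hgA.symm⟩

noncomputable def traceZeroEquivKerMap (hinj : Function.Injective μ) (f : S →+* T)
    (hker : ∀ z, f z = 0 ↔ ∃ x, μ x = z) :
    Multiplicative (LinearMap.ker (traceLinearMap (Fin 2) M M)) ≃* (map (n := Fin 2) f).ker :=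
  (MonoidHom.ofInjective (oneAddMap_injective hμ hinj)).trans
    (MulEquiv.subgroupCongr (range_oneAddMap hμ hinj f hker))

end Matrix.SpecialLinearGroup

open Ideal.Quotient Matrix.SpecialLinearGroup in
theorem congruence_kernel_iso_sl2_general {O : Type*} [CommRing O] [IsDomain O]
    (π : O) (hπ : Irreducible π)
    (r i : ℕ) (hir : i ≤ r) (h2i : r ≤ 2 * i) :
    let sl2 := LinearMap.ker (Matrix.traceLinearMap (Fin 2)
      (O ⧸ Ideal.span {π ^ (r - i)}) (O ⧸ Ideal.span {π ^ (r - i)}))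
    let K := MonoidHom.ker (Matrix.SpecialLinearGroup.map
      (Ideal.Quotient.factor (S := Ideal.span {π ^ r}) (T := Ideal.span {π ^ i})
        (Ideal.span_singleton_le_span_singleton.mpr (pow_dvd_pow π hir))))
    ∃ φ : sl2 ≃ K,
      (∀ a b : sl2, φ (a + b) = φ a * φ b) ∧
      ∀ (x : Matrix (Fin 2) (Fin 2) O)
        (hx : (Ideal.Quotient.mk (Ideal.span {π ^ (r - i)})).mapMatrix x ∈ sl2),
        ((φ ⟨(Ideal.Quotient.mk (Ideal.span {π ^ (r - i)})).mapMatrix x, hx⟩).val.val :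
            Matrix (Fin 2) (Fin 2) (O ⧸ Ideal.span {π ^ r})) =
          (Ideal.Quotient.mk (Ideal.span {π ^ r})).mapMatrix (1 + π ^ i • x) := by
  intro sl2 K
  have hr : π ^ i * π ^ (r - i) = π ^ r := pow_mul_pow_sub π hir
  have hdvd : π ^ r ∣ π ^ i * π ^ (r - i) := dvd_of_eq hr.symm
  let μ := (mulLeft (π ^ i) hdvd).toAddMonoidHom
  have hμ : ∀ x y, μ x * μ y = 0 := mulLeft_mul_mulLeft hdvd <| by
    rw [← pow_add]
    exact pow_dvd_pow π (by omega)
  have hinj : Function.Injective μ :=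
    mulLeft_injective hdvd (pow_ne_zero i hπ.ne_zero) (dvd_of_eq hr)
  let e := traceZeroEquivKerMap hμ hinj _ (factor_eq_zero_iff_exists_mulLeft hdvd
    (Ideal.span_singleton_le_span_singleton.mpr (pow_dvd_pow π hir)))
  exact ⟨Multiplicative.ofAdd.trans e.toEquiv, fun a b => map_mul e _ _,
    fun x _ => (mapMatrix_one_add_smul hdvd x).symm⟩

/-- Let `O` be a complete DVR with uniformizer `π` and residue field of odd finite order,
and `r ≥ i ≥ r/2`.  The map `x ↦ 1 + π^i x` induces a group isomorphism from the additive
group `sl_2(O/π^{r-i})` of trace-zero `2×2` matrices onto the kernel of the reduction map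
`SL_2(O/π^r) → SL_2(O/π^i)`. -/
theorem congruence_kernel_iso_sl2 {O : Type*} [CommRing O] [IsDomain O]
    [IsDiscreteValuationRing O] (π : O) (hπ : Irreducible π)
    [IsAdicComplete (Ideal.span {π}) O] [Finite (O ⧸ Ideal.span {π})]
    (hodd : Odd (Nat.card (O ⧸ Ideal.span {π})))
    (r i : ℕ) (hir : i ≤ r) (h2i : r ≤ 2 * i) :
    let sl2 := LinearMap.ker (Matrix.traceLinearMap (Fin 2)
      (O ⧸ Ideal.span {π ^ (r - i)}) (O ⧸ Ideal.span {π ^ (r - i)}))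
    let K := MonoidHom.ker (Matrix.SpecialLinearGroup.map
      (Ideal.Quotient.factor (S := Ideal.span {π ^ r}) (T := Ideal.span {π ^ i})
        (Ideal.span_singleton_le_span_singleton.mpr (pow_dvd_pow π hir))))
    ∃ φ : sl2 ≃ K,
      (∀ a b : sl2, φ (a + b) = φ a * φ b) ∧
      ∀ (x : Matrix (Fin 2) (Fin 2) O)
        (hx : (Ideal.Quotient.mk (Ideal.span {π ^ (r - i)})).mapMatrix x ∈ sl2),
        ((φ ⟨(Ideal.Quotient.mk (Ideal.span {π ^ (r - i)})).mapMatrix x, hx⟩).val.val :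
            Matrix (Fin 2) (Fin 2) (O ⧸ Ideal.span {π ^ r})) =
          (Ideal.Quotient.mk (Ideal.span {π ^ r})).mapMatrix (1 + π ^ i • x) :=
  congruence_kernel_iso_sl2_general π hπ r i hir h2i
end

section
/- Let F be a non-archimedean local field with residue field F_q, q odd, G = SL_2(O_F/p²), and S = {±1}·U·K₁ as above. The commutator subgroup of S equals B¹ = B ∩ K₁, the intersection of the upper triangular subgroup with the first congruence kernel. -/
/-!
Reduction mod `π` maps `S` into the abelian group `{±1} · U` over `𝔽_q`, so commutators of
elements of `S` lie in `K₁`. Since the kernel of reduction squares to zero, `g ↦ g₁₀ g₁₁` is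
additive on the preimage of `{±1} · U`, hence vanishes on commutators; as `g₁₁` is then a unit,
commutators are upper triangular. Conversely, every `g = [[1 + α, β], [0, 1 - α]]` in `B ∩ K₁`
equals `⁅u(1), ℓ(α)⁆ · u(α + β)`, and `u(y) = ⁅diag(t, t⁻¹), u(1)⁆` for `t = 1 + y/2`: this is
where `q` odd is needed.
-/

open scoped MatrixGroups commutatorElement

theorem isUnit_two_of_odd_natCard {R : Type*} [Ring R] (h : Odd (Nat.card R)) :
    IsUnit (2 : R) := by
  obtain ⟨y, hy⟩ := (Nat.Coprime.nsmul_right_bijective (G := R) h.coprime_two_right).2 1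
  have h2y : 2 * y = 1 := by simpa [nsmul_eq_mul] using hy
  exact isUnit_iff_exists.2 ⟨y, h2y, by rwa [mul_two, ← two_mul]⟩

theorem isUnit_of_isUnit_map_of_ker_sq_zero {R κ : Type*} [CommRing R] [CommRing κ]
    {ρ : R →+* κ} (hsurj : Function.Surjective ρ)
    (hρ : ∀ x y, ρ x = 0 → ρ y = 0 → x * y = 0) {x : R} (hx : IsUnit (ρ x)) : IsUnit x := by
  obtain ⟨y, hy⟩ := hsurj ↑hx.unit⁻¹
  have hn : ρ (x * y - 1) = 0 := by simp [hy]
  have hunit : IsUnit (1 + (x * y - 1)) :=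
    IsNilpotent.isUnit_one_add ⟨2, by rw [sq]; exact hρ _ _ hn hn⟩
  rw [add_sub_cancel] at hunit
  exact isUnit_of_mul_isUnit_left hunit

theorem Ideal.Quotient.factor_mul_eq_zero {O : Type*} [CommRing O] (π : O)
    (h : Ideal.span {π ^ 2} ≤ Ideal.span {π ^ 1}) (x y : O ⧸ Ideal.span {π ^ 2})
    (hx : Ideal.Quotient.factor h x = 0) (hy : Ideal.Quotient.factor h y = 0) : x * y = 0 := by
  obtain ⟨a, rfl⟩ := Ideal.Quotient.mk_surjective x
  obtain ⟨b, rfl⟩ := Ideal.Quotient.mk_surjective y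
  simp only [Ideal.Quotient.factor_mk, Ideal.Quotient.eq_zero_iff_mem,
    Ideal.mem_span_singleton, pow_one] at hx hy
  rw [← map_mul, Ideal.Quotient.eq_zero_iff_mem, Ideal.mem_span_singleton, sq]
  exact mul_dvd_mul hx hy

theorem Subgroup.apply_commutatorElement_eq_zero_of_map_mul {G A : Type*} [Group G]
    [AddCommGroup A] {H : Subgroup G} {f : G → A} (hf : ∀ g ∈ H, ∀ h ∈ H, f (g * h) = f g + f h)
    {s t : G} (hs : s ∈ H) (ht : t ∈ H) : f ⁅s, t⁆ = 0 := by
  let φ : H →* Multiplicative A :=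
    MonoidHom.mk' (fun g => Multiplicative.ofAdd (f g)) fun g h => hf g g.2 h h.2
  have hφ : φ ⁅(⟨s, hs⟩ : H), ⟨t, ht⟩⁆ = 1 := by
    rw [map_commutatorElement, commutatorElement_eq_one_iff_mul_comm, mul_comm]
  exact hφ

namespace Matrix.SpecialLinearGroup

variable {R κ : Type*} [CommRing R] [CommRing κ]

theorem mul_apply_fin_two (g h : SL(2, R)) (i j : Fin 2) :
    (g * h) i j = g i 0 * h 0 j + g i 1 * h 1 j := by
  simp [Matrix.mul_apply, Fin.sum_univ_two]

theorem det_fin_two_eq_one (g : SL(2, R)) : g 0 0 * g 1 1 - g 0 1 * g 1 0 = 1 := by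
  rw [← Matrix.det_fin_two]; exact g.2

/-- Over `𝔽_q` this is `{±1} · U`. -/
def scalarUnipotent (R : Type*) [CommRing R] : Subgroup SL(2, R) where
  carrier := {g | g 1 0 = 0 ∧ g 0 0 = g 1 1}
  mul_mem' := by
    rintro g h ⟨hg₁, hg₂⟩ ⟨hh₁, hh₂⟩
    simp [mul_apply_fin_two, hg₁, hh₁, hg₂, hh₂]
  one_mem' := by simp
  inv_mem' := by
    rintro g ⟨hg₁, hg₂⟩
    simp [coe_inv, adjugate_fin_two, hg₁, hg₂]

theorem mul_comm_of_mem_scalarUnipotent {g h : SL(2, R)} (hg : g ∈ scalarUnipotent R)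
    (hh : h ∈ scalarUnipotent R) : g * h = h * g := by
  obtain ⟨hg₁, hg₂⟩ := hg
  obtain ⟨hh₁, hh₂⟩ := hh
  ext i j
  fin_cases i <;> fin_cases j <;> simp [mul_apply_fin_two, hg₁, hh₁, hg₂, hh₂] <;> ring

section Reduction

variable {ρ : R →+* κ} {g h s t : SL(2, R)}

theorem mem_ker_map_iff_s14 : g ∈ (map ρ).ker ↔
    ρ (g 0 0) = 1 ∧ ρ (g 0 1) = 0 ∧ ρ (g 1 0) = 0 ∧ ρ (g 1 1) = 1 := by
  simp [MonoidHom.mem_ker, SpecialLinearGroup.ext_iff, Fin.forall_fin_two, and_assoc]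

theorem mem_comap_scalarUnipotent_iff : g ∈ (scalarUnipotent κ).comap (map ρ) ↔
    ρ (g 1 0) = 0 ∧ ρ (g 0 0) = ρ (g 1 1) :=
  Iff.rfl

theorem commutatorElement_mem_ker_map (hs : s ∈ (scalarUnipotent κ).comap (map ρ))
    (ht : t ∈ (scalarUnipotent κ).comap (map ρ)) : ⁅s, t⁆ ∈ (map ρ).ker := by
  rw [MonoidHom.mem_ker, map_commutatorElement, commutatorElement_eq_one_iff_mul_comm]
  exact mul_comm_of_mem_scalarUnipotent hs ht

variable (hρ : ∀ x y, ρ x = 0 → ρ y = 0 → x * y = 0)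
include hρ

theorem lowerRow_prod_mul (hg : g ∈ (scalarUnipotent κ).comap (map ρ))
    (hh : h ∈ (scalarUnipotent κ).comap (map ρ)) :
    (g * h) 1 0 * (g * h) 1 1 = g 1 0 * g 1 1 + h 1 0 * h 1 1 := by
  obtain ⟨hg₁, hg₂⟩ := mem_comap_scalarUnipotent_iff.1 hg
  obtain ⟨hh₁, hh₂⟩ := mem_comap_scalarUnipotent_iff.1 hh
  have hgg : g 1 0 * g 1 0 = 0 := hρ _ _ hg₁ hg₁
  have hgh : g 1 0 * h 1 0 = 0 := hρ _ _ hg₁ hh₁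
  have hsq : (g 1 1 * g 1 1 - 1) * h 1 0 = 0 := by
    refine hρ _ _ ?_ hh₁
    have := congrArg ρ (det_fin_two_eq_one g)
    simp only [map_sub, map_mul, map_one, hg₁, mul_zero, sub_zero, hg₂] at this ⊢
    rw [this, sub_self]
  rw [mul_apply_fin_two, mul_apply_fin_two]
  linear_combination h 0 0 * h 0 1 * hgg + g 1 0 * g 1 1 * det_fin_two_eq_one h +
    2 * h 0 1 * g 1 1 * hgh + h 1 1 * hsq

theorem commutatorElement_apply_one_zero (hs : s ∈ (scalarUnipotent κ).comap (map ρ))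
    (ht : t ∈ (scalarUnipotent κ).comap (map ρ)) : ⁅s, t⁆ 1 0 = 0 := by
  obtain ⟨-, h01, h10, -⟩ := mem_ker_map_iff_s14.1 (commutatorElement_mem_ker_map hs ht)
  have hf : ⁅s, t⁆ 1 0 * ⁅s, t⁆ 1 1 = 0 :=
    Subgroup.apply_commutatorElement_eq_zero_of_map_mul (f := fun g : SL(2, R) => g 1 0 * g 1 1)
      (fun g hg h hh => lowerRow_prod_mul hρ hg hh) hs ht
  linear_combination ⁅s, t⁆ 0 0 * hf - ⁅s, t⁆ 1 0 * det_fin_two_eq_one ⁅s, t⁆ -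
    ⁅s, t⁆ 1 0 * hρ _ _ h01 h10

end Reduction

def upperUnipotent (x : R) : SL(2, R) := ⟨!![1, x; 0, 1], by simp⟩

def lowerUnipotent (x : R) : SL(2, R) := ⟨!![1, 0; x, 1], by simp⟩

def diagUnit (t : Rˣ) : SL(2, R) := ⟨!![(t : R), 0; 0, ↑t⁻¹], by simp⟩

@[simp]
theorem coe_upperUnipotent (x : R) :
    (upperUnipotent x : Matrix (Fin 2) (Fin 2) R) = !![1, x; 0, 1] := rfl

@[simp]
theorem coe_lowerUnipotent (x : R) :
    (lowerUnipotent x : Matrix (Fin 2) (Fin 2) R) = !![1, 0; x, 1] := rfl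

@[simp]
theorem coe_diagUnit (t : Rˣ) :
    (diagUnit t : Matrix (Fin 2) (Fin 2) R) = !![(t : R), 0; 0, ↑t⁻¹] := rfl

theorem commutatorElement_diagUnit_upperUnipotent (t : Rˣ) (x : R) :
    ⁅diagUnit t, upperUnipotent x⁆ = upperUnipotent (((t : R) ^ 2 - 1) * x) := by
  ext i j
  fin_cases i <;> fin_cases j <;>
    simp [commutatorElement_def, mul_apply_fin_two, coe_inv, adjugate_fin_two]
  ring

theorem eq_commutatorElement_mul_upperUnipotent {g : SL(2, R)} (h10 : g 1 0 = 0)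
    (hα : (g 0 0 - 1) * (g 0 0 - 1) = 0) (hαβ : (g 0 0 - 1) * g 0 1 = 0) :
    g = ⁅upperUnipotent (1 : R), lowerUnipotent (g 0 0 - 1)⁆ *
      upperUnipotent (g 0 0 - 1 + g 0 1) := by
  have h11 : g 1 1 = 1 - (g 0 0 - 1) := by
    linear_combination (2 - g 0 0) * det_fin_two_eq_one g + g 1 1 * hα + (2 - g 0 0) * g 0 1 * h10
  ext i j
  fin_cases i <;> fin_cases j <;>
    simp [commutatorElement_def, mul_apply_fin_two, coe_inv, adjugate_fin_two, h10, h11]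
  · linear_combination hα
  · linear_combination -(g 0 0 + g 0 1) * hα - hαβ
  · linear_combination -hα
  · linear_combination -(g 0 0 - 1 + g 0 1) * hα

theorem exists_eq_commutatorElement_mul_commutatorElement {ρ : R →+* κ}
    (hρ : ∀ x y, ρ x = 0 → ρ y = 0 → x * y = 0) (h2 : IsUnit (2 : R)) {g : SL(2, R)}
    (hg : g ∈ (map ρ).ker) (h10 : g 1 0 = 0) :
    ∃ k₁ ∈ (map ρ : SL(2, R) →* SL(2, κ)).ker, ∃ k₂ ∈ (map ρ : SL(2, R) →* SL(2, κ)).ker,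
      g = ⁅upperUnipotent (1 : R), k₁⁆ * ⁅k₂, upperUnipotent 1⁆ := by
  obtain ⟨h00, h01, -, -⟩ := mem_ker_map_iff_s14.1 hg
  set α := g 0 0 - 1
  have hα : ρ α = 0 := by simp [α, h00]
  set y := α + g 0 1
  have hy : ρ y = 0 := by simp [y, hα, h01]
  obtain ⟨η, hη⟩ : ∃ η, 2 * η = 1 := ⟨_, h2.mul_val_inv⟩
  have hηy : ρ (η * y) = 0 := by simp [hy]
  set t : Rˣ := (IsNilpotent.isUnit_one_add ⟨2, (sq _).trans (hρ _ _ hηy hηy)⟩).unit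
  have ht : ρ t = 1 := by simp [t, hηy]
  have ht' : ρ ↑t⁻¹ = 1 := by
    simpa only [map_mul, ht, one_mul, map_one] using congrArg ρ t.mul_inv
  have ht2 : (t : R) ^ 2 - 1 = y := by
    simp only [t, IsUnit.unit_spec]
    linear_combination y * hη + η ^ 2 * hρ _ _ hy hy
  refine ⟨lowerUnipotent α, ?_, diagUnit t, ?_, ?_⟩
  · rw [mem_ker_map_iff_s14]; simp [hα]
  · rw [mem_ker_map_iff_s14]; simp [ht, ht']
  · rw [commutatorElement_diagUnit_upperUnipotent, ht2, mul_one]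
    exact eq_commutatorElement_mul_upperUnipotent h10 (hρ _ _ hα hα) (hρ _ _ hα h01)

end Matrix.SpecialLinearGroup

open Matrix.SpecialLinearGroup

/-- For `G = SL_2(O/p²)` over a local ring of integers with residue field of odd order,
the commutator subgroup of `S = {±1}·U·K₁` equals `B¹ = B ∩ K₁`, the intersection of the
upper triangular subgroup with the first congruence kernel. -/
theorem commutator_of_nilpotent_stabilizer {O : Type*} [CommRing O] (π : O)
    (hodd : Odd (Nat.card (O ⧸ Ideal.span {π}))) :
    let G := Matrix.SpecialLinearGroup (Fin 2) (O ⧸ Ideal.span {π ^ 2})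
    let K1 : Subgroup G := MonoidHom.ker (Matrix.SpecialLinearGroup.map
      (Ideal.Quotient.factor (S := Ideal.span {π ^ 2}) (T := Ideal.span {π ^ 1})
        (Ideal.span_singleton_le_span_singleton.mpr (pow_dvd_pow π (by norm_num)))))
    let U : Set G := {g | (g : Matrix (Fin 2) (Fin 2) (O ⧸ Ideal.span {π ^ 2})) 0 0 = 1 ∧
      (g : Matrix (Fin 2) (Fin 2) (O ⧸ Ideal.span {π ^ 2})) 1 1 = 1 ∧
      (g : Matrix (Fin 2) (Fin 2) (O ⧸ Ideal.span {π ^ 2})) 1 0 = 0}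
    let Zpm : Set G := {g | (g : Matrix (Fin 2) (Fin 2) (O ⧸ Ideal.span {π ^ 2})) = 1 ∨
      (g : Matrix (Fin 2) (Fin 2) (O ⧸ Ideal.span {π ^ 2})) = -1}
    let S : Subgroup G := Subgroup.closure (Zpm ∪ U ∪ ↑K1)
    let B : Set G := {g | (g : Matrix (Fin 2) (Fin 2) (O ⧸ Ideal.span {π ^ 2})) 1 0 = 0}
    ⁅S, S⁆ = Subgroup.closure (B ∩ ↑K1) := by
  intro G K1 U Zpm S B
  have hle : Ideal.span {π ^ 2} ≤ Ideal.span {π ^ 1} :=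
    Ideal.span_singleton_le_span_singleton.mpr (pow_dvd_pow π (by norm_num))
  have hρ := Ideal.Quotient.factor_mul_eq_zero π hle
  have h2 : IsUnit (2 : O ⧸ Ideal.span {π ^ 2}) :=
    isUnit_of_isUnit_map_of_ker_sq_zero (Ideal.Quotient.factor_surjective hle) hρ
      (by simpa only [map_ofNat] using isUnit_two_of_odd_natCard (by simpa only [pow_one]))
  have hSM : S ≤ (scalarUnipotent _).comap (map (Ideal.Quotient.factor hle)) := by
    rw [Subgroup.closure_le]
    rintro g (((hg | hg) | hg) | hg)
    · exact mem_comap_scalarUnipotent_iff.2 (by simp [hg])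
    · exact mem_comap_scalarUnipotent_iff.2 (by simp [hg])
    · exact mem_comap_scalarUnipotent_iff.2 (by simp [hg.1, hg.2.1, hg.2.2])
    · exact Subgroup.ker_le_comap _ _ hg
  have hu : upperUnipotent 1 ∈ S := Subgroup.subset_closure (Or.inl (Or.inr ⟨rfl, rfl, rfl⟩))
  apply le_antisymm
  · rw [Subgroup.commutator_le]
    intro s hs t ht
    exact Subgroup.subset_closure ⟨commutatorElement_apply_one_zero hρ (hSM hs) (hSM ht),
      commutatorElement_mem_ker_map (hSM hs) (hSM ht)⟩
  · rw [Subgroup.closure_le]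
    rintro g ⟨hB, hK⟩
    obtain ⟨k₁, hk₁, k₂, hk₂, rfl⟩ :=
      exists_eq_commutatorElement_mul_commutatorElement hρ h2 hK hB
    exact Subgroup.mul_mem _
      (Subgroup.commutator_mem_commutator hu (Subgroup.subset_closure (Or.inr hk₁)))
      (Subgroup.commutator_mem_commutator (Subgroup.subset_closure (Or.inr hk₂)) hu)
end

section
/- In SL_2 over the ring R = O/π² (O a discrete valuation ring with residue field k), for any a in the kernel of reduction of the lower unitriangular subgroup (i.e. a = lower unitriangular with below-diagonal entry in πR) with a ≠ 1, the intersection U ∩ aUa⁻¹ equals U¹, the subgroup of upper unitriangular matrices with entry in πR. Moreover U ∩ wUw⁻¹ = {1} for w the antidiagonal Weyl element. -/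
/-!
Conjugating `[[1, b], [0, 1]]` by `[[1, 0], [c, 1]]` gives `[[1 - bc, b], [-bc², 1 + bc]]`, which is
upper unitriangular exactly when `bc = 0`, and is then the matrix itself. In `O/π²` the ideal
`ϖR` contains every nonunit and squares to zero, so for `0 ≠ c ∈ ϖR` the condition `bc = 0`
says precisely `b ∈ ϖR`. Conjugating by `w` gives `[[1, 0], [-b, 1]]`, upper triangular only
for `b = 0`.
-/

open Matrix
open scoped MatrixGroups

section Quotient

variable {O : Type*} [CommRing O]

theorem span_mk_mul_self_eq_bot (π : O) :
    Ideal.span {Ideal.Quotient.mk (Ideal.span {π ^ 2}) π} *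
      Ideal.span {Ideal.Quotient.mk (Ideal.span {π ^ 2}) π} = ⊥ := by
  rw [Ideal.span_singleton_mul_span_singleton, Ideal.span_singleton_eq_bot, ← map_mul, ← sq,
    Ideal.Quotient.eq_zero_iff_mem]
  exact Ideal.mem_span_singleton_self _

theorem nonunits_subset_span_mk [IsLocalRing O] {π : O}
    (hπ : IsLocalRing.maximalIdeal O = Ideal.span {π}) (J : Ideal O) :
    nonunits (O ⧸ J) ⊆ Ideal.span {Ideal.Quotient.mk J π} := by
  intro b hb
  obtain ⟨y, rfl⟩ := Ideal.Quotient.mk_surjective b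
  have hy : y ∈ IsLocalRing.maximalIdeal O := fun hy => hb (hy.map _)
  rw [hπ] at hy
  simpa [Ideal.map_span] using Ideal.mem_map_of_mem (Ideal.Quotient.mk J) hy

end Quotient

section Unitriangular

def upperUnitriangular (R : Type*) [CommRing R] : Set SL(2, R) :=
  {g | (g : Matrix (Fin 2) (Fin 2) R) 0 0 = 1 ∧ (g : Matrix (Fin 2) (Fin 2) R) 1 1 = 1 ∧
    (g : Matrix (Fin 2) (Fin 2) R) 1 0 = 0}

variable {R : Type*} [CommRing R]

theorem coe_eq_of_mem_upperUnitriangular {g : SL(2, R)} (hg : g ∈ upperUnitriangular R) :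
    (g : Matrix (Fin 2) (Fin 2) R) = !![1, (g : Matrix (Fin 2) (Fin 2) R) 0 1; 0, 1] := by
  obtain ⟨h00, h11, h10⟩ := hg
  rw [eta_fin_two (g : Matrix (Fin 2) (Fin 2) R), h00, h11, h10]
  rfl

theorem one_mem_upperUnitriangular : (1 : SL(2, R)) ∈ upperUnitriangular R := by
  simp [upperUnitriangular]

theorem lower_mul_upper_mul_lower_neg (b c : R) :
    !![1, 0; c, 1] * !![1, b; 0, 1] * !![1, 0; -c, 1] =
      !![1 - b * c, b; -(b * c * c), 1 + b * c] := by
  ext i j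
  fin_cases i <;> fin_cases j <;> simp <;> ring

theorem weyl_mul_upper_mul_weyl_inv (b : R) :
    !![0, 1; -1, 0] * !![1, b; 0, 1] * !![0, -1; 1, 0] = !![1, 0; -b, 1] := by
  ext i j
  fin_cases i <;> fin_cases j <;> simp

theorem upperUnitriangular_inter_conj_lower {I : Ideal R} (hI : nonunits R ⊆ I)
    (hII : I * I = ⊥) (a : SL(2, R)) (h00 : (a : Matrix (Fin 2) (Fin 2) R) 0 0 = 1)
    (h11 : (a : Matrix (Fin 2) (Fin 2) R) 1 1 = 1) (h01 : (a : Matrix (Fin 2) (Fin 2) R) 0 1 = 0)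
    (h10 : (a : Matrix (Fin 2) (Fin 2) R) 1 0 ∈ I) (ha : a ≠ 1) :
    upperUnitriangular R ∩ (fun u => a * u * a⁻¹) '' upperUnitriangular R =
      {g | g ∈ upperUnitriangular R ∧ (g : Matrix (Fin 2) (Fin 2) R) 0 1 ∈ I} := by
  set c := (a : Matrix (Fin 2) (Fin 2) R) 1 0
  have hA : (a : Matrix (Fin 2) (Fin 2) R) = !![1, 0; c, 1] := by
    rw [eta_fin_two (a : Matrix (Fin 2) (Fin 2) R), h00, h11, h01]
  have hA_inv : ((a⁻¹ : SL(2, R)) : Matrix (Fin 2) (Fin 2) R) = !![1, 0; -c, 1] := by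
    rw [Matrix.SpecialLinearGroup.coe_inv, hA, adjugate_fin_two]
    simp
  have hc : c ≠ 0 := by
    intro hc
    apply ha
    ext : 1
    rw [hA, hc]
    simp [one_fin_two]
  have hconj : ∀ (u : SL(2, R)) (b : R), (u : Matrix (Fin 2) (Fin 2) R) = !![1, b; 0, 1] →
      ((a * u * a⁻¹ : SL(2, R)) : Matrix (Fin 2) (Fin 2) R) =
        !![1 - b * c, b; -(b * c * c), 1 + b * c] := by
    intro u b hu
    rw [Matrix.SpecialLinearGroup.coe_mul, Matrix.SpecialLinearGroup.coe_mul, hA, hA_inv, hu,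
      lower_mul_upper_mul_lower_neg]
  ext g
  constructor
  · rintro ⟨hg, u, hu, rfl⟩
    have hconj_u := hconj u _ (coe_eq_of_mem_upperUnitriangular hu)
    have hbc : (u : Matrix (Fin 2) (Fin 2) R) 0 1 * c = 0 := by
      simpa [hconj_u] using hg.1
    refine ⟨hg, ?_⟩
    rw [hconj_u]
    exact hI fun hb => hc (hb.mul_right_eq_zero.mp hbc)
  · rintro ⟨hg, hg01⟩
    have hbc : (g : Matrix (Fin 2) (Fin 2) R) 0 1 * c = 0 := by
      simpa [hII] using Ideal.mul_mem_mul hg01 h10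
    have hg_coe := coe_eq_of_mem_upperUnitriangular hg
    refine ⟨hg, g, hg, ?_⟩
    ext : 1
    rw [hconj g _ hg_coe, hbc, hg_coe]
    simp

theorem upperUnitriangular_inter_conj_weyl (w : SL(2, R))
    (hw : (w : Matrix (Fin 2) (Fin 2) R) = !![0, 1; -1, 0]) :
    upperUnitriangular R ∩ (fun u => w * u * w⁻¹) '' upperUnitriangular R = {1} := by
  have hw_inv : ((w⁻¹ : SL(2, R)) : Matrix (Fin 2) (Fin 2) R) = !![0, -1; 1, 0] := by
    rw [Matrix.SpecialLinearGroup.coe_inv, hw, adjugate_fin_two]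
    simp
  have hconj : ∀ (u : SL(2, R)) (b : R), (u : Matrix (Fin 2) (Fin 2) R) = !![1, b; 0, 1] →
      ((w * u * w⁻¹ : SL(2, R)) : Matrix (Fin 2) (Fin 2) R) = !![1, 0; -b, 1] := by
    intro u b hu
    rw [Matrix.SpecialLinearGroup.coe_mul, Matrix.SpecialLinearGroup.coe_mul, hw, hw_inv, hu,
      weyl_mul_upper_mul_weyl_inv]
  ext g
  constructor
  · rintro ⟨⟨-, -, hg10⟩, u, hu, rfl⟩
    have hconj_u := hconj u _ (coe_eq_of_mem_upperUnitriangular hu)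
    have hb : (u : Matrix (Fin 2) (Fin 2) R) 0 1 = 0 := by
      simpa [hconj_u] using hg10
    ext : 1
    rw [hconj_u, hb]
    simp [one_fin_two]
  · rintro rfl
    exact ⟨one_mem_upperUnitriangular, 1, one_mem_upperUnitriangular, by simp⟩

end Unitriangular

/-- In `SL_2(O/π²)` (`O` a DVR with uniformizer `π`): for every `a` in the kernel of
reduction of the lower unitriangular subgroup (i.e. `a = [[1,0],[c,1]]` with `c ∈ πR`)
with `a ≠ 1`, one has `U ∩ aUa⁻¹ = U¹`, the upper unitriangular matrices with entry in
`πR`; moreover `U ∩ wUw⁻¹ = {1}` for the antidiagonal Weyl element `w = [[0,1],[-1,0]]`. -/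
theorem unitriangular_intersections_SL2 {O : Type*} [CommRing O] [IsDomain O]
    [IsDiscreteValuationRing O] (π : O) (hπ : Irreducible π) :
    let R := O ⧸ Ideal.span {π ^ 2}
    let ϖ : R := Ideal.Quotient.mk _ π
    let G := Matrix.SpecialLinearGroup (Fin 2) R
    let U : Set G := {g | (g : Matrix (Fin 2) (Fin 2) R) 0 0 = 1 ∧
      (g : Matrix (Fin 2) (Fin 2) R) 1 1 = 1 ∧ (g : Matrix (Fin 2) (Fin 2) R) 1 0 = 0}
    let U1 : Set G := {g | g ∈ U ∧ (g : Matrix (Fin 2) (Fin 2) R) 0 1 ∈ Ideal.span {ϖ}}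
    (∀ a : G, (a : Matrix (Fin 2) (Fin 2) R) 0 0 = 1 →
      (a : Matrix (Fin 2) (Fin 2) R) 1 1 = 1 → (a : Matrix (Fin 2) (Fin 2) R) 0 1 = 0 →
      (a : Matrix (Fin 2) (Fin 2) R) 1 0 ∈ Ideal.span {ϖ} → a ≠ 1 →
      U ∩ (fun u => a * u * a⁻¹) '' U = U1) ∧
    (∀ w : G, (w : Matrix (Fin 2) (Fin 2) R) = !![0, 1; -1, 0] →
      U ∩ (fun u => w * u * w⁻¹) '' U = {1}) := by
  intro R ϖ G U U1
  exact ⟨upperUnitriangular_inter_conj_lower (nonunits_subset_span_mk hπ.maximalIdeal_eq _)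
    (span_mk_mul_self_eq_bot π), upperUnitriangular_inter_conj_weyl⟩
end
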